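/- arXiv:1611.08962 — 3 statements merged into one kernel-verified Lean document; each statement's English description precedes it below -/
import Mathlib

section
/- Let p be a prime with p ≡ 3 (mod 4), and let v ∈ ℂ^p be defined by v_m = (−(p−1) + 2i√p)/(p+1) if m ∈ Q and v_m = 1 if m ∈ N. Then for every integer j, |Σ_{m=0}^{p−1} v_m ω_p^{−jm}|² = p; equivalently, the unit vector (1/√p)·v is unbiased to the Fourier basis of ℂ^p. -/
open scoped Classical

/-- `ω p = exp(2πi/p)`, a primitive `p`-th root of unity. -/
noncomputable def omegaRoot (p : ℕ) : ℂ := Complex.exp (2 * Real.pi * Complex.I / p)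

/-- The quadratic residues modulo `p` (including `0`), viewed inside `{0, 1, …, p-1}`:
`m ∈ Q` iff `m ≡ x² (mod p)` for some integer `x`. -/
noncomputable def Qres (p : ℕ) : Finset ℕ :=
  (Finset.range p).filter (fun m => ∃ x : ℤ, Int.ModEq (p : ℤ) (x ^ 2) (m : ℤ))

/-- The value `(−(p−1) + 2i√p)/(p+1)` taken by `v` on quadratic residues. -/
noncomputable def alphaQ (p : ℕ) : ℂ :=
  (-((p : ℂ) - 1) + 2 * (Real.sqrt p : ℂ) * Complex.I) / ((p : ℂ) + 1)

/-!
Write `χ` for the quadratic character and `α = alphaQ p`. Since `𝟙_Q = (1 + χ + δ₀) / 2`,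
the Fourier coefficient of `v` at frequency `c` is
`(α + 1)/2 · p · [c = 0] + (α - 1)/2 · (G(c) + 1)`, where `G(c) = ∑ₐ χ(a) ψ(ac)` is a Gauss
sum (zero at `c = 0`). At `c = 0` this is `i√p`. For `c ≠ 0`, `G(c)² = χ(-1) p = -p` because
`p ≡ 3 mod 4`, so `G(c)` is purely imaginary and `|G(c) + 1|² = p + 1`, while
`|(α - 1)/2|² = p / (p + 1)`.
-/

section SquareIndicator

variable {F K : Type*} [Field F] [Fintype F] [DecidableEq F] [Field K] [NeZero (2 : K)]

theorem ite_isSquare_eq_quadraticChar (a : F) (x y : K) :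
    (if IsSquare a then x else y)
      = (x + y) / 2 + (x - y) / 2 * ((quadraticChar F a : K) + if a = 0 then 1 else 0) := by
  rw [quadraticChar_apply, quadraticCharFun]
  split_ifs <;> simp_all <;> field_simp <;> ring

theorem sum_ite_isSquare_mul (f : F → K) (x y : K) :
    ∑ a, (if IsSquare a then x else y) * f a
      = (x + y) / 2 * ∑ a, f a + (x - y) / 2 * (∑ a, (quadraticChar F a : K) * f a + f 0) := by
  simp_rw [ite_isSquare_eq_quadraticChar, add_mul, Finset.sum_add_distrib, mul_assoc,
    ← Finset.mul_sum]
  simp [add_mul, Finset.sum_add_distrib]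

end SquareIndicator

section GaussSum

variable {F R : Type*} [Field F] [Fintype F] [DecidableEq F] [CommRing R] [IsDomain R]
  [CharZero R]

theorem sum_quadraticChar_mul_addChar_sq (hF : ringChar F ≠ 2) {ψ : AddChar F R}
    (hψ : ψ.IsPrimitive) {c : F} (hc : c ≠ 0) :
    (∑ a, (quadraticChar F a : R) * ψ (a * c)) ^ 2
      = quadraticChar F (-1) * Fintype.card F := by
  set χ := (quadraticChar F).ringHomComp (Int.castRingHom R)
  have hχ : χ ≠ 1 :=
    (MulChar.ringHomComp_ne_one_iff Int.cast_injective).mpr (quadraticChar_ne_one hF)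
  have hsum : ∑ a, (quadraticChar F a : R) * ψ (a * c) = gaussSum χ (ψ.mulShift c) := by
    simp [gaussSum, χ, mul_comm c]
  rw [hsum, gaussSum_sq hχ ((quadraticChar_isQuadratic F).comp _) (.of_ne_one (hψ hc))]
  simp [χ]

end GaussSum

theorem Complex.sq_norm_add_one_of_sq_eq_neg {z : ℂ} {r : ℝ} (hr : 0 ≤ r) (hz : z ^ 2 = -r) :
    ‖z + 1‖ ^ 2 = r + 1 := by
  have hre := congrArg Complex.re hz
  have him := congrArg Complex.im hz
  simp only [sq, Complex.mul_re, Complex.mul_im, Complex.neg_re, Complex.neg_im,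
    Complex.ofReal_re, Complex.ofReal_im] at hre him
  have hz0 : z.re = 0 := by
    rcases mul_eq_zero.mp (by linarith : z.re * z.im = 0) with h | h
    · exact h
    · rw [h] at hre; nlinarith
  rw [Complex.sq_norm, Complex.normSq_apply]
  simp only [Complex.add_re, Complex.add_im, Complex.one_re, Complex.one_im, hz0]
  rw [hz0] at hre
  linarith

section alphaQ

variable (q : ℕ)

theorem alphaQ_add_one_div_two_mul_add :
    (alphaQ q + 1) / 2 * q + (alphaQ q - 1) / 2 = Real.sqrt q * Complex.I := by
  have : (q : ℂ) + 1 ≠ 0 := by exact_mod_cast q.succ_ne_zero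
  rw [alphaQ]; field_simp; ring

theorem sq_norm_alphaQ_sub_one_div_two :
    ‖(alphaQ q - 1) / 2‖ ^ 2 = q / (q + 1) := by
  have hq : (q : ℂ) + 1 ≠ 0 := by exact_mod_cast q.succ_ne_zero
  have hs : ((Real.sqrt q : ℂ)) ^ 2 = q := by exact_mod_cast Real.sq_sqrt q.cast_nonneg
  have hsI : (Real.sqrt q * Complex.I) ^ 2 = -(q : ℝ) := by
    rw [mul_pow, hs, Complex.I_sq]; push_cast; ring
  have hfactor : (alphaQ q - 1) / 2
      = Real.sqrt q * Complex.I * (Real.sqrt q * Complex.I + 1) / (q + 1) := by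
    rw [alphaQ]; field_simp
    linear_combination 2 * hs - 2 * (Real.sqrt q : ℂ) ^ 2 * Complex.I_sq
  rw [hfactor, norm_div, norm_mul, div_pow, mul_pow,
    Complex.sq_norm_add_one_of_sq_eq_neg q.cast_nonneg hsI]
  have hnorm : ‖(q : ℂ) + 1‖ = q + 1 := by exact_mod_cast Complex.norm_natCast (q + 1)
  have hq' : (q : ℝ) + 1 ≠ 0 := by positivity
  simp only [norm_mul, Complex.norm_I, mul_one, Complex.norm_real, Real.norm_eq_abs,
    abs_of_nonneg (Real.sqrt_nonneg _), Real.sq_sqrt q.cast_nonneg, hnorm]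
  field_simp

end alphaQ

theorem FiniteField.ringChar_ne_two_of_card_mod_four_eq_three {F : Type*} [Field F]
    [Fintype F] (hF : Fintype.card F % 4 = 3) : ringChar F ≠ 2 := by
  rw [Ne, FiniteField.even_card_iff_char_two]
  omega

theorem sq_norm_sum_ite_isSquare_alphaQ_mul_addChar {F : Type*} [Field F] [Fintype F]
    [DecidableEq F] (hF : Fintype.card F % 4 = 3) {ψ : AddChar F ℂ} (hψ : ψ.IsPrimitive) (c : F) :
    ‖∑ a, (if IsSquare a then alphaQ (Fintype.card F) else 1) * ψ (a * c)‖ ^ 2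
      = Fintype.card F := by
  set q := Fintype.card F
  have hchar := FiniteField.ringChar_ne_two_of_card_mod_four_eq_three hF
  rw [sum_ite_isSquare_mul, AddChar.sum_mulShift c hψ, zero_mul, AddChar.map_zero_eq_one]
  by_cases hc : c = 0
  · have hG : ∑ a, (quadraticChar F a : ℂ) * ψ (a * c) = 0 := by
      simp only [hc, mul_zero, AddChar.map_zero_eq_one, mul_one]
      rw [← Int.cast_sum, quadraticChar_sum_zero hchar, Int.cast_zero]
    rw [if_pos hc, hG, zero_add, mul_one, alphaQ_add_one_div_two_mul_add]
    simp [q]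
  · have hG : (∑ a, (quadraticChar F a : ℂ) * ψ (a * c)) ^ 2 = -(q : ℝ) := by
      rw [sum_quadraticChar_mul_addChar_sq hchar hψ hc, quadraticChar_neg_one hchar,
        ZMod.χ₄_nat_three_mod_four hF]
      push_cast
      ring
    rw [if_neg hc, Nat.cast_zero, mul_zero, zero_add, norm_mul, mul_pow,
      sq_norm_alphaQ_sub_one_div_two, Complex.sq_norm_add_one_of_sq_eq_neg q.cast_nonneg hG]
    field_simp

theorem ZMod.sum_range_natCast {M : Type*} [AddCommMonoid M] (n : ℕ) [NeZero n]
    (f : ZMod n → M) : ∑ m ∈ Finset.range n, f m = ∑ a, f a :=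
  Finset.sum_nbij' (fun m => (m : ZMod n)) ZMod.val (by simp) (by simp [ZMod.val_lt])
    (fun m hm => ZMod.val_cast_of_lt (Finset.mem_range.mp hm)) (by simp) (by simp)

theorem mem_Qres_iff_isSquare {p m : ℕ} (hm : m < p) : m ∈ Qres p ↔ IsSquare (m : ZMod p) := by
  simp only [Qres, Finset.mem_filter, Finset.mem_range, hm, true_and,
    ← ZMod.intCast_eq_intCast_iff, Int.cast_pow, Int.cast_natCast]
  constructor
  · rintro ⟨x, hx⟩
    exact ⟨x, by rw [← hx, sq]⟩
  · rintro ⟨r, hr⟩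
    obtain ⟨x, rfl⟩ := ZMod.intCast_surjective r
    exact ⟨x, by rw [hr, sq]⟩

theorem isPrimitiveRoot_omegaRoot {p : ℕ} (hp : p ≠ 0) : IsPrimitiveRoot (omegaRoot p) p := by
  simpa [omegaRoot] using Complex.isPrimitiveRoot_exp p hp

theorem zmodChar_omegaRoot_intCast (p : ℕ) [NeZero p] (k : ℤ) :
    AddChar.zmodChar p (isPrimitiveRoot_omegaRoot (NeZero.ne p)).pow_eq_one (k : ZMod p)
      = omegaRoot p ^ k := by
  rw [← zsmul_one, AddChar.map_zsmul_eq_zpow, ← Nat.cast_one, AddChar.zmodChar_apply', pow_one]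

theorem stmt_4 (p : ℕ) (hp : p.Prime) (hp4 : p % 4 = 3) (j : ℤ) :
    ‖∑ m ∈ Finset.range p,
        (if m ∈ Qres p then alphaQ p else 1) * omegaRoot p ^ (-(j * (m : ℤ)))‖ ^ 2
      = p := by
  have : Fact p.Prime := ⟨hp⟩
  have hω := isPrimitiveRoot_omegaRoot hp.ne_zero
  have hsum : ∑ m ∈ Finset.range p,
      (if m ∈ Qres p then alphaQ p else 1) * omegaRoot p ^ (-(j * (m : ℤ)))
      = ∑ a : ZMod p, (if IsSquare a then alphaQ (Fintype.card (ZMod p)) else 1)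
          * AddChar.zmodChar p hω.pow_eq_one (a * (-j : ℤ)) := by
    rw [ZMod.card, ← ZMod.sum_range_natCast]
    refine Finset.sum_congr rfl fun m hm => ?_
    congr 1
    · exact if_congr (mem_Qres_iff_isSquare (Finset.mem_range.mp hm)) rfl rfl
    · rw [show (m : ZMod p) * ((-j : ℤ) : ZMod p) = ((-(j * m) : ℤ) : ZMod p) by
        push_cast; ring, zmodChar_omegaRoot_intCast]
  rw [hsum, sq_norm_sum_ite_isSquare_alphaQ_mul_addChar (by rwa [ZMod.card])
    (AddChar.zmodChar_primitive_of_primitive_root p hω), ZMod.card]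
end

section
/- Let p be a prime with p ≡ 3 (mod 4), and let v ∈ ℂ^p be defined by v_m = (−(p−1) + 2i√p)/(p+1) if m ∈ Q and v_m = 1 if m ∈ N. Then the p vectors (1/√p)·v^(k), k = 0,…,p−1, form an orthonormal basis of ℂ^p that is mutually unbiased to the standard basis of ℂ^p and mutually unbiased to the Fourier basis of ℂ^p. -/
open scoped ComplexInnerProductSpace Classical

/-- The `j`-th Fourier basis vector of `ℂ^p`, with components `ω_p^{jm}/√p`. -/
noncomputable def fourierVec (p : ℕ) (j : Fin p) : EuclideanSpace ℂ (Fin p) :=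
  WithLp.toLp 2 (fun m => omegaRoot p ^ ((j : ℕ) * (m : ℕ)) / (Real.sqrt p : ℂ))

/-- The cyclic shift `v^(k)` of `v`, with components `(v^(k))_{(m+k) mod p} = v_m`. -/
def cyclicShift {p : ℕ} (k : Fin p) (v : EuclideanSpace ℂ (Fin p)) :
    EuclideanSpace ℂ (Fin p) :=
  WithLp.toLp 2 (fun n => v (n - k))

/-- The vector `v ∈ ℂ^p` with `v_m = (−(p−1) + 2i√p)/(p+1)` for `m ∈ Q` and `v_m = 1`
for `m ∈ N`. -/
noncomputable def vQ (p : ℕ) : EuclideanSpace ℂ (Fin p) :=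
  WithLp.toLp 2 (fun m => if (m : ℕ) ∈ Qres p then alphaQ p else 1)

/-!
Read as a function on `𝔽_p`, the vector `v` is a CAZAC sequence: `|v m| = 1` and its periodic
autocorrelation `R(d) = ∑ₙ conj (v n) * v (n + d)` vanishes for `d ≠ 0`. Indeed `v = a + b g`
where `g = ±1` is the sign of being a square (with `g 0 = 1`); the autocorrelation of `g` is `-1`
off zero, by a Jacobi sum computation together with `χ(-1) = -1` for `p ≡ 3 (mod 4)`, and
`alphaQ p` is the unimodular number for which this forces `R(d) = 0`. Zero autocorrelation makes
the normalised cyclic shifts orthonormal, constant amplitude makes them unbiased to the standard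
basis, and `|v̂(t)|² = ∑_d R(d) ψ(t d) = p` makes them unbiased to the Fourier basis.
-/

open Finset ComplexConjugate

section Autocorrelation

variable {G : Type*} [AddCommGroup G] [Fintype G]

def autocorr (w : G → ℂ) (d : G) : ℂ := ∑ n, conj (w n) * w (n + d)

lemma autocorr_const_add_mul (a b : ℂ) (g : G → ℂ) (d : G) :
    autocorr (fun n => a + b * g n) d =
      Fintype.card G * (conj a * a) + conj a * b * ∑ n, g n + conj b * a * ∑ n, conj (g n)
        + conj b * b * autocorr g d := by
  have hexpand : ∀ n, conj (a + b * g n) * (a + b * g (n + d)) =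
      conj a * a + conj a * b * g (n + d) + conj b * a * conj (g n)
        + conj b * b * (conj (g n) * g (n + d)) := fun n => by simp only [map_add, map_mul]; ring
  have hshift : ∑ n, g (n + d) = ∑ n, g n := Equiv.sum_comp (Equiv.addRight d) g
  simp only [autocorr, hexpand, sum_add_distrib, ← mul_sum, sum_const, card_univ, nsmul_eq_mul,
    hshift]
  ring

lemma norm_sq_sum_mul_addChar (w : G → ℂ) (ψ : AddChar G ℂ) :
    (‖∑ n, w n * ψ n‖ ^ 2 : ℂ) = ∑ d, autocorr w d * ψ d := by
  have hterm : ∀ m n, w m * ψ m * conj (w n * ψ n) = conj (w n) * w m * ψ (m - n) := by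
    intro m n
    rw [map_mul, ← AddChar.map_neg_eq_conj, sub_eq_add_neg, AddChar.map_add_eq_mul]
    ring
  rw [← Complex.mul_conj', map_sum, sum_mul_sum]
  simp only [hterm]
  rw [sum_comm]
  simp only [autocorr, sum_mul]
  conv_rhs => rw [sum_comm]
  refine sum_congr rfl fun n _ => ?_
  exact Fintype.sum_equiv (Equiv.subRight n) _ _ fun m => by simp

/-- Constant amplitude, zero autocorrelation. -/
structure IsCAZAC (w : G → ℂ) : Prop where
  norm_eq_one : ∀ n, ‖w n‖ = 1
  autocorr_eq_zero : ∀ d ≠ 0, autocorr w d = 0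

lemma IsCAZAC.autocorr_eq {w : G → ℂ} (hw : IsCAZAC w) (d : G) :
    autocorr w d = if d = 0 then (Fintype.card G : ℂ) else 0 := by
  split_ifs with hd
  · simp [hd, autocorr, Complex.conj_mul', hw.norm_eq_one]
  · exact hw.autocorr_eq_zero d hd

lemma IsCAZAC.norm_sq_sum_mul_addChar {w : G → ℂ} (hw : IsCAZAC w) (ψ : AddChar G ℂ) :
    ‖∑ n, w n * ψ n‖ ^ 2 = Fintype.card G := by
  have := _root_.norm_sq_sum_mul_addChar w ψ
  simp only [hw.autocorr_eq, ite_mul, zero_mul, sum_ite_eq', mem_univ, if_true,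
    AddChar.map_zero_eq_one, mul_one] at this
  exact_mod_cast this

end Autocorrelation

lemma MulChar.IsQuadratic.apply_mul_apply_self {F R : Type*} [Field F] [CommRing R]
    {χ : MulChar F R} (hχ : χ.IsQuadratic) {d : F} (hd : d ≠ 0) : χ d * χ d = 1 := by
  nth_rw 2 [← hχ.inv]
  rw [MulChar.inv_apply', ← map_mul, mul_inv_cancel₀ hd, map_one]

lemma MulChar.IsQuadratic.sum_mul_apply_add {F R : Type*} [Field F] [Fintype F] [CommRing R]
    [IsDomain R]
    {χ : MulChar F R} (hχ : χ.IsQuadratic) (hχ1 : χ ≠ 1) {d : F} (hd : d ≠ 0) :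
    ∑ x, χ x * χ (x + d) = -1 := by
  have hJ : jacobiSum χ χ = -χ (-1) := by
    simpa only [hχ.inv] using jacobiSum_nontrivial_inv hχ1
  have hsq : χ (-d) * χ d = χ (-1) := by
    rw [← neg_one_mul, map_mul, mul_assoc, hχ.apply_mul_apply_self hd, mul_one]
  calc ∑ x, χ x * χ (x + d)
      = ∑ y, χ (-d * y) * χ (d * (1 - y)) := by
        refine (Fintype.sum_equiv (Equiv.mulLeft₀ (-d) (neg_ne_zero.mpr hd)) _ _ fun y => ?_).symm
        simp only [Equiv.mulLeft₀_apply]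
        ring_nf
    _ = χ (-1) * jacobiSum χ χ := by
        simp only [jacobiSum, mul_sum, map_mul]
        refine sum_congr rfl fun y _ => ?_
        rw [← hsq]; ring
    _ = -1 := by
        rw [hJ, mul_neg, hχ.apply_mul_apply_self (neg_ne_zero.mpr one_ne_zero)]

section SquareSign

variable (F : Type*) [Field F] [Fintype F] [DecidableEq F]

def squareSign (x : F) : ℤ := if IsSquare x then 1 else -1

variable {F}

lemma squareSign_eq_quadraticChar_add (x : F) :
    squareSign F x = quadraticChar F x + if x = 0 then 1 else 0 := by
  rcases eq_or_ne x 0 with rfl | hx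
  · simp [squareSign]
  · by_cases hsq : IsSquare x
    · simp [squareSign, hsq, hx, (quadraticChar_one_iff_isSquare hx).mpr hsq]
    · simp [squareSign, hsq, hx, quadraticChar_neg_one_iff_not_isSquare.mpr hsq]

lemma sum_squareSign (hF : ringChar F ≠ 2) : ∑ x, squareSign F x = 1 := by
  simp only [squareSign_eq_quadraticChar_add, sum_add_distrib, quadraticChar_sum_zero hF,
    sum_ite_eq', mem_univ, if_true, zero_add]

lemma sum_squareSign_mul_squareSign_add (hF : Fintype.card F % 4 = 3) {d : F} (hd : d ≠ 0) :
    ∑ x, squareSign F x * squareSign F (x + d) = -1 := by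
  have hchar : ringChar F ≠ 2 := by
    rw [Ne, FiniteField.even_card_iff_char_two]; omega
  have hneg : quadraticChar F (-d) = -quadraticChar F d := by
    rw [← neg_one_mul, map_mul, quadraticChar_neg_one_iff_not_isSquare.mpr, neg_one_mul]
    rw [FiniteField.isSquare_neg_one_iff]; omega
  simp only [squareSign_eq_quadraticChar_add, add_mul, mul_add, sum_add_distrib, mul_ite,
    ite_mul, mul_one, one_mul, mul_zero, zero_mul, add_eq_zero_iff_eq_neg, sum_ite_eq',
    mem_univ, if_true, (quadraticChar_isQuadratic F).sum_mul_apply_add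
      (quadraticChar_ne_one hchar) hd]
  simp [hd, hneg]

end SquareSign

lemma conj_alphaQ_mul_alphaQ (q : ℕ) : conj (alphaQ q) * alphaQ q = 1 := by
  have hq : (q : ℂ) + 1 ≠ 0 := by exact_mod_cast Nat.succ_ne_zero q
  have hsqrt : ((Real.sqrt q : ℝ) : ℂ) ^ 2 = q := by
    rw [← Complex.ofReal_pow, Real.sq_sqrt (Nat.cast_nonneg q), Complex.ofReal_natCast]
  simp only [alphaQ, map_div₀, map_add, map_neg, map_sub, map_mul, map_ofNat, map_one,
    Complex.conj_natCast, Complex.conj_ofReal, Complex.conj_I]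
  field_simp
  linear_combination (-4 * Complex.I ^ 2) * hsqrt - 4 * (q : ℂ) * Complex.I_sq

lemma norm_alphaQ (q : ℕ) : ‖alphaQ q‖ = 1 := by
  have h : (‖alphaQ q‖ : ℂ) ^ 2 = 1 := by rw [← Complex.conj_mul', conj_alphaQ_mul_alphaQ]
  exact (pow_eq_one_iff_of_nonneg (norm_nonneg _) two_ne_zero).mp (by exact_mod_cast h)

lemma alphaQ_add_conj (q : ℕ) : ((q : ℂ) + 1) * (alphaQ q + conj (alphaQ q)) = 2 - 2 * q := by
  have hq : (q : ℂ) + 1 ≠ 0 := by exact_mod_cast Nat.succ_ne_zero q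
  simp only [alphaQ, map_div₀, map_add, map_neg, map_sub, map_mul, map_ofNat, map_one,
    Complex.conj_natCast, Complex.conj_ofReal, Complex.conj_I]
  field_simp
  ring

section ResidueSeq

variable (F : Type*) [Field F] [Fintype F] [DecidableEq F]

noncomputable def residueSeq (x : F) : ℂ := if IsSquare x then alphaQ (Fintype.card F) else 1

variable {F}

lemma residueSeq_eq (x : F) :
    residueSeq F x = (alphaQ (Fintype.card F) + 1) / 2
      + (alphaQ (Fintype.card F) - 1) / 2 * squareSign F x := by
  by_cases hx : IsSquare x <;> simp [residueSeq, squareSign, hx] <;> ring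

lemma isCAZAC_residueSeq (hF : Fintype.card F % 4 = 3) : IsCAZAC (residueSeq F) where
  norm_eq_one x := by
    by_cases hx : IsSquare x <;> simp [residueSeq, hx, norm_alphaQ]
  autocorr_eq_zero d hd := by
    have hchar : ringChar F ≠ 2 := by
      rw [Ne, FiniteField.even_card_iff_char_two]; omega
    have hsum : ∑ x, (squareSign F x : ℂ) = 1 := by exact_mod_cast sum_squareSign hchar
    have hcorr : autocorr (fun x => (squareSign F x : ℂ)) d = -1 := by
      simp only [autocorr, map_intCast]
      exact_mod_cast sum_squareSign_mul_squareSign_add hF hd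
    set q := Fintype.card F
    have h1 := conj_alphaQ_mul_alphaQ q
    have h2 := alphaQ_add_conj q
    rw [funext residueSeq_eq, autocorr_const_add_mul]
    simp only [map_intCast, hsum, hcorr, map_div₀, map_add, map_sub, map_one,
      map_ofNat]
    linear_combination (1 / 4 : ℂ) * h2 + (q + 1 : ℂ) / 4 * h1

end ResidueSeq

lemma norm_inv_sqrt_sq (p : ℕ) : ‖((Real.sqrt p : ℂ))⁻¹‖ ^ 2 = (p : ℝ)⁻¹ := by
  rw [norm_inv, Complex.norm_real, Real.norm_of_nonneg (Real.sqrt_nonneg _), inv_pow,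
    Real.sq_sqrt (Nat.cast_nonneg p)]

lemma conj_inv_sqrt_mul_inv_sqrt (p : ℕ) :
    conj ((Real.sqrt p : ℂ))⁻¹ * ((Real.sqrt p : ℂ))⁻¹ = (p : ℂ)⁻¹ := by
  rw [Complex.conj_mul', ← Complex.ofReal_pow, norm_inv_sqrt_sq]
  push_cast
  rfl

lemma inner_single_cyclicShift {p : ℕ} (v : EuclideanSpace ℂ (Fin p)) (j k : Fin p) :
    ⟪EuclideanSpace.single j (1 : ℂ), cyclicShift k v⟫ = v (j - k) := by
  simp [EuclideanSpace.inner_single_left, cyclicShift]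

section CyclicShift

variable {p : ℕ} [NeZero p]

lemma inner_cyclicShift_cyclicShift (v : EuclideanSpace ℂ (Fin p)) (k l : Fin p) :
    ⟪cyclicShift k v, cyclicShift l v⟫ = autocorr v (k - l) := by
  simp only [PiLp.inner_apply, RCLike.inner_apply, cyclicShift, autocorr]
  exact Fintype.sum_equiv (Equiv.subRight k) _ _ fun n => by simp [mul_comm]

lemma orthonormal_cyclicShift {v : EuclideanSpace ℂ (Fin p)} (hv : IsCAZAC v) :
    Orthonormal ℂ fun k : Fin p => ((Real.sqrt p : ℂ))⁻¹ • cyclicShift k v := by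
  rw [orthonormal_iff_ite]
  intro k l
  rw [inner_smul_left, inner_smul_right, inner_cyclicShift_cyclicShift, hv.autocorr_eq,
    Fintype.card_fin, sub_eq_zero]
  split_ifs
  · rw [← mul_assoc, conj_inv_sqrt_mul_inv_sqrt, inv_mul_cancel₀ (NeZero.ne _)]
  · simp

lemma inner_addChar_cyclicShift (ψ : AddChar (Fin p) ℂ) (v : EuclideanSpace ℂ (Fin p))
    (k : Fin p) :
    ⟪WithLp.toLp 2 ⇑ψ, cyclicShift k v⟫ = conj (ψ k) * ∑ n, v n * ψ⁻¹ n := by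
  simp only [PiLp.inner_apply, RCLike.inner_apply, cyclicShift, mul_sum]
  exact Fintype.sum_equiv (Equiv.subRight k) _ _ fun n => by
    simp only [Equiv.subRight_apply, ← AddChar.map_neg_eq_conj]
    rw [mul_left_comm, AddChar.inv_apply, ← AddChar.map_add_eq_mul]
    congr 2
    abel

end CyclicShift

lemma norm_sq_inner_addChar_cyclicShift {p : ℕ} [NeZero p] {v : EuclideanSpace ℂ (Fin p)}
    (hv : IsCAZAC v) (ψ : AddChar (Fin p) ℂ) (k : Fin p) :
    ‖⟪WithLp.toLp 2 ⇑ψ, cyclicShift k v⟫‖ ^ 2 = p := by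
  rw [inner_addChar_cyclicShift, norm_mul, RCLike.norm_conj, AddChar.norm_apply, one_mul,
    hv.norm_sq_sum_mul_addChar, Fintype.card_fin]

lemma mem_Qres_iff {p : ℕ} [NeZero p] (x : ZMod p) : x.val ∈ Qres p ↔ IsSquare x := by
  rw [Qres, Finset.mem_filter, Finset.mem_range]
  constructor
  · rintro ⟨-, y, hy⟩
    have hcast : ((y ^ 2 : ℤ) : ZMod p) = ((x.val : ℤ) : ZMod p) :=
      (ZMod.intCast_eq_intCast_iff _ _ _).mpr hy
    push_cast at hcast
    rw [ZMod.natCast_zmod_val] at hcast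
    exact ⟨(y : ZMod p), by rw [← hcast]; ring⟩
  · rintro ⟨r, hr⟩
    refine ⟨ZMod.val_lt x, (r.val : ℤ), (ZMod.intCast_eq_intCast_iff _ _ _).mp ?_⟩
    push_cast
    rw [ZMod.natCast_zmod_val, ZMod.natCast_zmod_val, hr]
    ring

lemma isCAZAC_vQ {p : ℕ} [Fact p.Prime] (hp4 : p % 4 = 3) : IsCAZAC (vQ p) := by
  -- for `p = n + 1`, `ZMod p` is `Fin p` by definition
  obtain ⟨n, rfl⟩ : ∃ n, p = n + 1 := ⟨p - 1, by have := NeZero.pos p; omega⟩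
  have hv : ⇑(vQ (n + 1)) = residueSeq (ZMod (n + 1)) := funext fun m => by
    simp only [vQ, residueSeq, ZMod.card]
    exact if_congr (mem_Qres_iff (p := n + 1) m) rfl rfl
  have hcard : Fintype.card (ZMod (n + 1)) % 4 = 3 := by rwa [ZMod.card]
  rw [hv]
  exact isCAZAC_residueSeq (F := ZMod (n + 1)) hcard

lemma omegaRoot_pow_val_mul_val (N : ℕ) [NeZero N] (j m : ZMod N) :
    omegaRoot N ^ (j.val * m.val) = ZMod.stdAddChar (j * m) := by
  have hjm : j * m = ((j.val * m.val : ℕ) : ZMod N) := by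
    rw [Nat.cast_mul, ZMod.natCast_zmod_val, ZMod.natCast_zmod_val]
  rw [hjm, ZMod.stdAddChar_apply, ZMod.toCircle_natCast, omegaRoot, ← Complex.exp_nat_mul]
  congr 1
  ring

lemma exists_addChar_fourierVec_eq {p : ℕ} [NeZero p] (j : Fin p) :
    ∃ ψ : AddChar (Fin p) ℂ, fourierVec p j = ((Real.sqrt p : ℂ))⁻¹ • WithLp.toLp 2 ⇑ψ := by
  obtain ⟨n, rfl⟩ : ∃ n, p = n + 1 := ⟨p - 1, by have := NeZero.pos p; omega⟩
  refine ⟨(ZMod.stdAddChar.mulShift j : AddChar (ZMod (n + 1)) ℂ), ?_⟩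
  ext m
  simp only [fourierVec, PiLp.smul_apply, smul_eq_mul]
  rw [div_eq_inv_mul]
  exact congrArg _ (omegaRoot_pow_val_mul_val (n + 1) j m)

theorem stmt_5 (p : ℕ) (hp : p.Prime) (hp4 : p % 4 = 3) :
    ∃ B : OrthonormalBasis (Fin p) ℂ (EuclideanSpace ℂ (Fin p)),
      (∀ k : Fin p, B k = ((Real.sqrt p : ℂ))⁻¹ • cyclicShift k (vQ p)) ∧
      (∀ j k : Fin p,
        ‖⟪EuclideanSpace.single j (1 : ℂ), B k⟫‖ ^ 2 = 1 / p) ∧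
      (∀ j k : Fin p, ‖⟪fourierVec p j, B k⟫‖ ^ 2 = 1 / p) := by
  have := Fact.mk hp
  have hv := isCAZAC_vQ hp4
  have hon := orthonormal_cyclicShift hv
  have hspan := hon.linearIndependent.span_eq_top_of_card_eq_finrank (by simp)
  refine ⟨OrthonormalBasis.mk hon hspan.ge, fun k => by simp, fun j k => ?_, fun j k => ?_⟩
  · rw [OrthonormalBasis.coe_mk, inner_smul_right, inner_single_cyclicShift, norm_mul, mul_pow,
      norm_inv_sqrt_sq, hv.norm_eq_one, one_pow, mul_one, one_div]
  · obtain ⟨ψ, hψ⟩ := exists_addChar_fourierVec_eq j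
    have hp0 : (p : ℝ) ≠ 0 := Nat.cast_ne_zero.mpr hp.ne_zero
    rw [OrthonormalBasis.coe_mk, hψ, inner_smul_left, inner_smul_right, norm_mul, norm_mul,
      mul_pow, mul_pow, RCLike.norm_conj, norm_inv_sqrt_sq, norm_sq_inner_addChar_cyclicShift hv]
    field_simp
end

section
/- Let p be a prime with p ≡ 1 (mod 4), let z₀ = cos θ + i sin θ where cos θ = (√p − 1)/(p − 1) and sin θ = √(1 − cos²θ) ≥ 0, and let v ∈ ℂ^p be defined by v₀ = 1, v_m = z₀ for m ∈ Q*, and v_m = conj(z₀) for m ∈ N. Then for every integer j, |Σ_{m=0}^{p−1} v_m ω_p^{−jm}|² = p; equivalently, the unit vector (1/√p)·v is unbiased to the Fourier basis of ℂ^p. -/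
open scoped Classical

/-- The nonzero quadratic residues modulo `p`, viewed inside `{1, …, p-1}`:
`m ∈ Q*` iff `m ≢ 0 (mod p)` and `m ≡ x² (mod p)` for some integer `x`. -/
noncomputable def QresStar (p : ℕ) : Finset ℕ :=
  (Finset.range p).filter
    (fun m => ¬ ((p : ℤ) ∣ (m : ℤ)) ∧ ∃ x : ℤ, Int.ModEq (p : ℤ) (x ^ 2) (m : ℤ))

/-- `cos θ = (√p − 1)/(p − 1)`. -/
noncomputable def cosR (p : ℕ) : ℝ := (Real.sqrt p - 1) / ((p : ℝ) - 1)

/-- `sin θ = √(1 − cos²θ) ≥ 0`. -/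
noncomputable def sinR (p : ℕ) : ℝ := Real.sqrt (1 - cosR p ^ 2)

/-- `z₀ = cos θ + i sin θ`. -/
noncomputable def z0 (p : ℕ) : ℂ := (cosR p : ℂ) + (sinR p : ℂ) * Complex.I

/-- The entries of `v ∈ ℂ^p`: `v₀ = 1`, `v_m = z₀` for `m ∈ Q*`, `v_m = conj z₀`
for `m ∈ N`. -/
noncomputable def vEntry (p : ℕ) (m : ℕ) : ℂ :=
  if m = 0 then 1 else if m ∈ QresStar p then z0 p else starRingEnd ℂ (z0 p)

/-!
With χ the quadratic character and c = cos θ, s = sin θ, the entries are v_m = c + i s χ(m)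
for m ≠ 0 and v₀ = c + (1 - c), so the `j`-th coefficient is `(1 - c) + c Σ_a ω^{-ja} + i s g`,
where `g` is the Gauss sum of χ against the additive character `a ↦ ω^{-ja}`. If `p ∣ j` then
`g = Σ χ = 0` and the coefficient is `1 + c (p - 1) = √p`. Otherwise the character sum vanishes and
`g² = χ(-1) p = p` because `p ≡ 1 (mod 4)`, so `g = ±√p` is real and the squared norm is
`(1 - c)² + (1 - c²) p`, which equals `p` exactly because `c (√p + 1) = 1`.
-/

open Finset Complex

lemma omegaRoot_zpow (p : ℕ) [NeZero p] (k : ℤ) :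
    omegaRoot p ^ k = ZMod.stdAddChar (k : ZMod p) := by
  rw [omegaRoot, ← Complex.exp_int_mul, ZMod.stdAddChar_coe]
  ring_nf

lemma sum_range_eq_sum_zmod_val {M : Type*} [AddCommMonoid M] (n : ℕ) [NeZero n] (f : ℕ → M) :
    ∑ m ∈ range n, f m = ∑ a : ZMod n, f a.val :=
  sum_nbij' (fun m => (m : ZMod n)) ZMod.val (fun _ _ => mem_univ _)
    (fun a _ => mem_range.mpr (ZMod.val_lt a))
    (fun _ hm => ZMod.val_natCast_of_lt (mem_range.mp hm))
    (fun a _ => ZMod.natCast_zmod_val a)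
    (fun _ hm => by rw [ZMod.val_natCast_of_lt (mem_range.mp hm)])

lemma val_mem_QresStar_iff {p : ℕ} [NeZero p] (a : ZMod p) :
    a.val ∈ QresStar p ↔ a ≠ 0 ∧ IsSquare a := by
  have hcast : ((a.val : ℤ) : ZMod p) = a := by simp
  simp only [QresStar, mem_filter, mem_range, ZMod.val_lt, true_and]
  refine and_congr ?_ ⟨fun ⟨x, hx⟩ => ⟨x, ?_⟩, fun ⟨r, hr⟩ => ⟨r.val, ?_⟩⟩
  · rw [← ZMod.intCast_zmod_eq_zero_iff_dvd, hcast]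
  · rw [← hcast, ← (ZMod.intCast_eq_intCast_iff _ _ _).mpr hx]; push_cast; ring
  · rw [← ZMod.intCast_eq_intCast_iff, hcast, hr]; push_cast; simp [sq]

noncomputable def complexQuadraticChar (F : Type*) [Field F] [Fintype F] [DecidableEq F] :
    MulChar F ℂ :=
  (quadraticChar F).ringHomComp (Int.castRingHom ℂ)

lemma complexQuadraticChar_apply {F : Type*} [Field F] [Fintype F] [DecidableEq F] (a : F) :
    complexQuadraticChar F a = (quadraticChar F a : ℂ) := rfl

lemma vEntry_val (p : ℕ) [Fact p.Prime] (a : ZMod p) :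
    vEntry p a.val = (if a = 0 then 1 - (cosR p : ℂ) else 0) + cosR p
      + sinR p * I * complexQuadraticChar (ZMod p) a := by
  simp only [vEntry, val_mem_QresStar_iff, complexQuadraticChar_apply, quadraticChar_apply,
    quadraticCharFun, ZMod.val_eq_zero]
  by_cases ha : a = 0
  · simp [ha]
  · by_cases hsq : IsSquare a <;> simp [ha, hsq, z0]

lemma sum_vEntry_mul_omegaRoot_zpow (p : ℕ) [Fact p.Prime] (j : ℤ) :
    ∑ m ∈ range p, vEntry p m * omegaRoot p ^ (-(j * (m : ℤ))) =
      (1 - cosR p) + cosR p * ∑ a : ZMod p, ZMod.stdAddChar (a * ((-j : ℤ) : ZMod p))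
        + sinR p * I * gaussSum (complexQuadraticChar (ZMod p))
            (ZMod.stdAddChar.mulShift ((-j : ℤ) : ZMod p)) := by
  have hterm (a : ZMod p) : omegaRoot p ^ (-(j * (a.val : ℤ))) =
      ZMod.stdAddChar (a * ((-j : ℤ) : ZMod p)) := by
    rw [omegaRoot_zpow]; push_cast; rw [ZMod.natCast_zmod_val]; ring_nf
  simp only [sum_range_eq_sum_zmod_val p, vEntry_val, hterm, add_mul, sum_add_distrib, ite_mul,
    zero_mul, sum_ite_eq', mem_univ, if_true, AddChar.map_zero_eq_one, mul_one, ← mul_sum, gaussSum,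
    AddChar.mulShift_apply, mul_assoc, mul_comm (((-j : ℤ) : ZMod p))]

lemma gaussSum_complexQuadraticChar_sq {F : Type*} [Field F] [Fintype F] [DecidableEq F]
    (hF : Fintype.card F % 4 = 1) {ψ : AddChar F ℂ} (hψ : ψ.IsPrimitive) :
    gaussSum (complexQuadraticChar F) ψ ^ 2 = Fintype.card F := by
  have hchar : ringChar F ≠ 2 := fun h => by
    have := FiniteField.even_card_of_char_two h; omega
  have hχ : complexQuadraticChar F ≠ 1 :=
    (MulChar.ringHomComp_ne_one_iff Int.cast_injective).mpr (quadraticChar_ne_one hchar)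
  rw [gaussSum_sq hχ ((quadraticChar_isQuadratic F).comp _) hψ, complexQuadraticChar_apply,
    quadraticChar_neg_one hchar, ZMod.χ₄_nat_one_mod_four hF, Int.cast_one, one_mul]

lemma gaussSum_complexQuadraticChar_one {F : Type*} [Field F] [Fintype F] [DecidableEq F]
    (hF : ringChar F ≠ 2) : gaussSum (complexQuadraticChar F) 1 = 0 :=
  gaussSum_one_right ((MulChar.ringHomComp_ne_one_iff Int.cast_injective).mpr
    (quadraticChar_ne_one hF))

lemma cosR_eq_inv {p : ℕ} (hp : p ≠ 1) : cosR p = (√p + 1)⁻¹ := by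
  have hsqrt : √(p : ℝ) ≠ 1 := by
    rw [Ne, Real.sqrt_eq_one]; exact_mod_cast hp
  have hfactor : (p : ℝ) - 1 = (√p - 1) * (√p + 1) := by
    linear_combination (Real.sq_sqrt p.cast_nonneg).symm
  rw [cosR, hfactor, div_mul_cancel_left₀ (sub_ne_zero.mpr hsqrt)]

lemma cosR_mul_sqrt_add_one {p : ℕ} (hp : p ≠ 1) : cosR p * (√p + 1) = 1 := by
  rw [cosR_eq_inv hp, inv_mul_cancel₀ (by positivity)]

lemma sinR_sq {p : ℕ} (hp : p ≠ 1) : sinR p ^ 2 = 1 - cosR p ^ 2 := by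
  have hc : 0 ≤ cosR p := by rw [cosR_eq_inv hp]; positivity
  have hc1 : cosR p ≤ 1 := by nlinarith [cosR_mul_sqrt_add_one hp, Real.sqrt_nonneg p]
  exact Real.sq_sqrt (by nlinarith)

lemma one_sub_cosR_add_cosR_mul {p : ℕ} (hp : p ≠ 1) : 1 - cosR p + cosR p * p = √p := by
  linear_combination (√p - 1) * cosR_mul_sqrt_add_one hp - cosR p * Real.sq_sqrt p.cast_nonneg

lemma norm_one_sub_cosR_add_sinR_mul_sq {p : ℕ} (hp : p ≠ 1) {g : ℂ} (hg : g ^ 2 = p) :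
    ‖(1 - cosR p : ℂ) + sinR p * I * g‖ ^ 2 = p := by
  have hsqrt : ((√p : ℝ) : ℂ) ^ 2 = p := by exact_mod_cast Real.sq_sqrt p.cast_nonneg
  have hreal : (1 - cosR p) ^ 2 + sinR p ^ 2 * √p ^ 2 = p := by
    linear_combination (√p ^ 2) * sinR_sq hp + Real.sq_sqrt p.cast_nonneg
      - (1 - cosR p + cosR p * √p) * cosR_mul_sqrt_add_one hp
  rcases sq_eq_sq_iff_eq_or_eq_neg.mp (hg.trans hsqrt.symm) with rfl | rfl <;>
  · rw [Complex.sq_norm, Complex.normSq_apply]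
    simp only [add_re, sub_re, one_re, ofReal_re, mul_re, I_re, ofReal_im, I_im, mul_im, add_im,
      sub_im, one_im, mul_neg, neg_re, neg_im, neg_mul, neg_neg, neg_zero, mul_zero, mul_one,
      sub_self, zero_mul, add_zero, zero_add]
    linear_combination hreal

theorem stmt_8 (p : ℕ) (hp : p.Prime) (hp4 : p % 4 = 1) (j : ℤ) :
    ‖∑ m ∈ Finset.range p,
        vEntry p m * omegaRoot p ^ (-(j * (m : ℤ)))‖ ^ 2 = p := by
  have := Fact.mk hp
  have hp1 : p ≠ 1 := hp.ne_one
  have hψ := ZMod.isPrimitive_stdAddChar p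
  rw [sum_vEntry_mul_omegaRoot_zpow, AddChar.sum_mulShift _ hψ, ZMod.card]
  split_ifs with hb
  · have hchar : ringChar (ZMod p) ≠ 2 := by rw [ZMod.ringChar_zmod_n]; omega
    have hsum : (1 - cosR p + cosR p * p : ℂ) = (√p : ℝ) := by
      exact_mod_cast congrArg ((↑) : ℝ → ℂ) (one_sub_cosR_add_cosR_mul hp1)
    rw [hb, AddChar.mulShift_zero, gaussSum_complexQuadraticChar_one hchar, mul_zero, add_zero,
      hsum, Complex.norm_real, Real.norm_eq_abs, sq_abs, Real.sq_sqrt p.cast_nonneg]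
  · rw [Nat.cast_zero, mul_zero, add_zero]
    refine norm_one_sub_cosR_add_sinR_mul_sq hp1 ?_
    rw [gaussSum_complexQuadraticChar_sq (by rwa [ZMod.card])
      (AddChar.IsPrimitive.of_ne_one (hψ hb)), ZMod.card]
end
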